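/- arXiv:1709.02944 — 2 statements merged into one kernel-verified Lean document; each statement's English description precedes it below -/
import Mathlib

section
/- For n ≥ 2 and any point i ∈ {1, ..., n}, the stabilizer Stab_i(n) is a maximal proper subgroup of S_n: Stab_i(n) ≠ S_n, and any subgroup H of S_n with Stab_i(n) ≤ H satisfies H = Stab_i(n) or H = S_n. -/
open Equiv MulAction

theorem stabilizer_maximal (n : ℕ) (hn : 2 ≤ n) (i : Fin n) :
    MulAction.stabilizer (Equiv.Perm (Fin n)) i ≠ ⊤ ∧
    ∀ H : Subgroup (Equiv.Perm (Fin n)),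
      MulAction.stabilizer (Equiv.Perm (Fin n)) i ≤ H →
      H = MulAction.stabilizer (Equiv.Perm (Fin n)) i ∨ H = ⊤ := by
  have : Nontrivial (Fin n) := Fin.nontrivial_iff_two_le.mpr hn
  -- `Perm α` acts 2-transitively, hence primitively, on `α`, and in a transitive action
  -- primitivity is equivalent to maximality of the point stabilizers.
  have hcoatom : IsCoatom (stabilizer (Perm (Fin n)) i) :=
    IsPreprimitive.isCoatom_stabilizer_of_isPreprimitive (Perm (Fin n)) i
  exact ⟨hcoatom.1, fun H hH => (hcoatom.le_iff.mp hH).symm⟩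
end

section
/- Let L be a lattice with least element ⊥ and let a be an atom of L that is also a neutral element. Then for any x ∈ L, x is a modular element of L if and only if a ⊔ x is a modular element of L. -/
/-!
A neutral atom `a` distributes: `(a ⊔ p) ⊓ q = a ⊓ q ⊔ p ⊓ q`, and it is join-prime. The first fact
turns the modular law for `a ⊔ x` into the one for `x` with the summand `a ⊓ z` added, which gives
one direction at once. Conversely, if `y ≤ z` then `w := (x ⊔ y) ⊓ z` lies between
`u := x ⊓ z ⊔ y` and `a ⊔ u`, so `w = a ⊓ w ⊔ u`; either `a ⊓ w = ⊥`, or `a ≤ w ≤ x ⊔ y` and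
join-primeness puts `a` below `x ⊓ z` or below `y`, hence below `u`.
-/

section

variable {L : Type*} [Lattice L]

/-- The median characterization of neutral elements (Grätzer–Schmidt). -/
def IsNeutral (a : L) : Prop :=
  ∀ y z : L, (a ⊓ y) ⊔ (y ⊓ z) ⊔ (z ⊓ a) = (a ⊔ y) ⊓ (y ⊔ z) ⊓ (z ⊔ a)

def IsModularElement (x : L) : Prop :=
  ∀ y z : L, y ≤ z → (x ⊔ y) ⊓ z = (x ⊓ z) ⊔ y

theorem inf_sup_le_sup_inf_of_le (x : L) {y z : L} (hyz : y ≤ z) :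
    x ⊓ z ⊔ y ≤ (x ⊔ y) ⊓ z :=
  sup_le (inf_le_inf_right z le_sup_left) (le_inf le_sup_right hyz)

theorem isModularElement_of_le (x : L)
    (h : ∀ y z : L, y ≤ z → (x ⊔ y) ⊓ z ≤ x ⊓ z ⊔ y) : IsModularElement x :=
  fun y z hyz => (h y z hyz).antisymm (inf_sup_le_sup_inf_of_le x hyz)

namespace IsNeutral

variable {a : L}

theorem sup_inf_eq_of_le (hn : IsNeutral a) (p : L) {q : L} (haq : a ≤ q) :
    (a ⊔ p) ⊓ q = a ⊔ p ⊓ q :=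
  calc (a ⊔ p) ⊓ q = (a ⊔ p) ⊓ (p ⊔ q) ⊓ (q ⊔ a) := by
        rw [sup_eq_left.mpr haq, inf_assoc, inf_eq_right.mpr (le_sup_right : q ≤ p ⊔ q)]
    _ = a ⊓ p ⊔ p ⊓ q ⊔ q ⊓ a := (hn p q).symm
    _ = a ⊔ p ⊓ q := by
        rw [inf_eq_right.mpr haq, sup_right_comm, sup_eq_right.mpr (inf_le_left : a ⊓ p ≤ a)]

theorem median_eq_inf_of_disjoint [OrderBot L] (hn : IsNeutral a) {p q : L}
    (hp : Disjoint a p) (hq : Disjoint a q) :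
    (a ⊔ p) ⊓ (p ⊔ q) ⊓ (q ⊔ a) = p ⊓ q := by
  rw [← hn p q, disjoint_iff.mp hp, inf_comm q, disjoint_iff.mp hq, bot_sup_eq, sup_bot_eq]

end IsNeutral

namespace IsAtom

variable [OrderBot L] {a : L}

theorem le_or_le_of_le_sup (ha : IsAtom a) (hn : IsNeutral a) {p q : L} (h : a ≤ p ⊔ q) :
    a ≤ p ∨ a ≤ q := by
  by_contra! hpq
  have hp := ha.not_le_iff_disjoint.mp hpq.1
  have hle : a ≤ p ⊓ q := by
    rw [← hn.median_eq_inf_of_disjoint hp (ha.not_le_iff_disjoint.mp hpq.2)]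
    exact le_inf (le_inf le_sup_left h) le_sup_right
  exact hpq.1 (hle.trans inf_le_left)

theorem sup_inf_eq (ha : IsAtom a) (hn : IsNeutral a) (p q : L) :
    (a ⊔ p) ⊓ q = a ⊓ q ⊔ p ⊓ q := by
  by_cases haq : a ≤ q
  · rw [hn.sup_inf_eq_of_le p haq, inf_eq_left.mpr haq]
  have hq := ha.not_le_iff_disjoint.mp haq
  rw [disjoint_iff.mp hq, bot_sup_eq]
  by_cases hap : a ≤ p
  · rw [sup_eq_right.mpr hap]
  refine le_antisymm ?_ (inf_le_inf_right q le_sup_right)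
  calc (a ⊔ p) ⊓ q ≤ (a ⊔ p) ⊓ (p ⊔ q) ⊓ (q ⊔ a) :=
        le_inf (inf_le_inf_left _ le_sup_right) (inf_le_right.trans le_sup_left)
    _ = p ⊓ q := hn.median_eq_inf_of_disjoint (ha.not_le_iff_disjoint.mp hap) hq

theorem isModularElement_sup (ha : IsAtom a) (hn : IsNeutral a) {x : L}
    (hx : IsModularElement x) : IsModularElement (a ⊔ x) := fun y z hyz => by
  rw [sup_assoc, ha.sup_inf_eq hn, hx y z hyz, ha.sup_inf_eq hn, sup_assoc]

theorem isModularElement_of_sup (ha : IsAtom a) (hn : IsNeutral a) {x : L}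
    (hax : IsModularElement (a ⊔ x)) : IsModularElement x := by
  refine isModularElement_of_le x fun y z hyz => ?_
  set w := (x ⊔ y) ⊓ z
  set u := x ⊓ z ⊔ y
  have hw : w ≤ a ⊔ u :=
    calc w ≤ (a ⊔ x ⊔ y) ⊓ z := inf_le_inf_right z (sup_le_sup_right le_sup_right y)
      _ = a ⊓ z ⊔ x ⊓ z ⊔ y := by rw [hax y z hyz, ha.sup_inf_eq hn]
      _ ≤ a ⊔ u := by rw [sup_assoc]; exact sup_le_sup_right inf_le_left _
  have hw_eq : w = a ⊓ w ⊔ u :=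
    calc w = (a ⊔ u) ⊓ w := (inf_eq_right.mpr hw).symm
      _ = a ⊓ w ⊔ u := by
          rw [ha.sup_inf_eq hn, inf_eq_left.mpr (inf_sup_le_sup_inf_of_le x hyz)]
  rcases ha.le_iff.mp (inf_le_left : a ⊓ w ≤ a) with hbot | htop
  · rw [hw_eq, hbot, bot_sup_eq]
  have haw : a ≤ w := inf_eq_left.mp htop
  have hau : a ≤ u := by
    rcases ha.le_or_le_of_le_sup hn (haw.trans inf_le_left) with hax | hay
    · exact (le_inf hax (haw.trans inf_le_right)).trans le_sup_left
    · exact hay.trans le_sup_right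
  rw [hw_eq, htop, sup_eq_right.mpr hau]

end IsAtom

end

theorem modular_iff_atom_join_modular {L : Type*} [Lattice L] [OrderBot L]
    (a : L) (ha : IsAtom a)
    (hn : ∀ y z : L, (a ⊓ y) ⊔ (y ⊓ z) ⊔ (z ⊓ a) = (a ⊔ y) ⊓ (y ⊔ z) ⊓ (z ⊔ a))
    (x : L) :
    (∀ y z : L, y ≤ z → (x ⊔ y) ⊓ z = (x ⊓ z) ⊔ y) ↔
    (∀ y z : L, y ≤ z → ((a ⊔ x) ⊔ y) ⊓ z = ((a ⊔ x) ⊓ z) ⊔ y) :=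
  ⟨ha.isModularElement_sup hn, ha.isModularElement_of_sup hn⟩
end
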